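/- Let u and v be 012-strings of the same length and p ∈ ℕ. Then u →ᵖ v in the sense of label strings (Pieri chains with the crossing condition i_s < j_t for s ≤ t) holds if and only if there is a chain u = u⁰ →¹ u¹ →¹ ... →¹ uᵖ = v in which the indices satisfy the stronger condition jₜ ≤ i_{t+1} for all t (the non-overlapping condition of the geometric Pieri rule). -/

import Mathlib

inductive PieriType | A | B | C | D | E | F
deriving DecidableEq

open PieriType in
/-- The 15 rules of Table 1: (type, (a₁,b₁), S, (a₂,b₂)). -/
def pieriRules : List (PieriType × (ℕ × ℕ) × List ℕ × (ℕ × ℕ)) :=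
  [ (A, (0,2), [], (2,0)),
    (B, (3,2), [0], (2,3)),
    (C, (0,4), [0], (4,0)),
    (D, (1,2), [0], (2,1)),
    (D, (1,2), [0,3], (5,7)),
    (D, (7,5), [0,3], (2,1)),
    (D, (7,5), [0,3], (5,7)),
    (E, (1,4), [0,2], (4,1)),
    (E, (1,4), [0,2], (2,3)),
    (E, (3,5), [0,2], (4,1)),
    (E, (3,5), [0,2], (2,3)),
    (F, (0,5), [], (5,0)),
    (F, (0,5), [0,2,4], (6,1)),
    (F, (1,6), [0,2,4], (5,0)),
    (F, (1,6), [0,2,4], (6,1)) ]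

/-- `u →¹ v` with index `(i,j)` using a rule of the given type. -/
def PieriStep (u v : List ℕ) (i j : ℕ) (ty : PieriType) : Prop :=
  ∃ r ∈ pieriRules, r.1 = ty ∧ i < j ∧ j < u.length ∧ v.length = u.length ∧
    u.getD i 8 = r.2.1.1 ∧ v.getD i 8 = r.2.1.2 ∧
    u.getD j 8 = r.2.2.2.1 ∧ v.getD j 8 = r.2.2.2.2 ∧
    (∀ k, i < k → k < j → u.getD k 8 ∈ r.2.2.1) ∧
    (∀ k, k ≠ i → k ≠ j → u.getD k 8 = v.getD k 8)

/-- A Pieri chain: consecutive steps with the crossing condition `i_s < j_t` for `s ≤ t`. -/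
def IsPieriChain (L : List (List ℕ)) (idx : ℕ → ℕ × ℕ) (ty : ℕ → PieriType) : Prop :=
  (∀ t, t + 1 < L.length →
      PieriStep (L.getD t []) (L.getD (t+1) []) (idx t).1 (idx t).2 (ty t)) ∧
  (∀ s t, s ≤ t → t + 1 < L.length → (idx s).1 < (idx t).2)

/-- `u →ᵖ v` : there is a Pieri chain of length `p` from `u` to `v`. -/
def PieriRel (p : ℕ) (u v : List ℕ) : Prop :=
  ∃ L idx ty, L.length = p + 1 ∧ L.getD 0 [] = u ∧ L.getD p [] = v ∧ IsPieriChain L idx ty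

/-- A chain is right-increasing if `j₁ < j₂ < ⋯ < j_p`. -/
def RightIncreasing (L : List (List ℕ)) (idx : ℕ → ℕ × ℕ) : Prop :=
  ∀ s t, s < t → t + 1 < L.length → (idx s).2 < (idx t).2

def IsLabelString (u : List ℕ) : Prop := ∀ x ∈ u, x ≤ 7
def Is012String (u : List ℕ) : Prop := ∀ x ∈ u, x ≤ 2

/-! Give each label the weight `0` on `{0,1,2}`, `1` on `{3,4}` and `2` above. Every rule of
Table 1 weakly increases the total weight of a string, and the total weight vanishes exactly on
012-strings; hence every string in a Pieri chain ending at a 012-string is itself a 012-string.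
Between 012-strings only the swap rules `A` and `(D, (1,2), [0], (2,1))` apply, and for two
consecutive swaps `(i,j)`, `(i',j')` the entries left behind by the first one leave no room for
`i < j'` unless `j ≤ i'`. Conversely, `iₛ < jₛ ≤ iₛ₊₁ < ⋯ ≤ iₜ < jₜ`. -/

theorem Finset.sum_add_eq_sum_add_of_eq_off_pair {α M : Type*} [DecidableEq α] [AddCommMonoid M]
    {s : Finset α} {f g : α → M} {i j : α} (hi : i ∈ s) (hj : j ∈ s) (hij : i ≠ j)
    (hfg : ∀ k ∈ s, k ≠ i → k ≠ j → f k = g k) :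
    ∑ k ∈ s, f k + (g i + g j) = ∑ k ∈ s, g k + (f i + f j) := by
  have hsub : {i, j} ⊆ s := Finset.insert_subset hi (Finset.singleton_subset_iff.2 hj)
  have hrest : ∑ k ∈ s \ {i, j}, f k = ∑ k ∈ s \ {i, j}, g k :=
    Finset.sum_congr rfl fun k hk => by
      simp only [Finset.mem_sdiff, Finset.mem_insert, Finset.mem_singleton, not_or] at hk
      exact hfg k hk.1 hk.2.1 hk.2.2
  rw [← Finset.sum_sdiff hsub, ← Finset.sum_sdiff (f := g) hsub, Finset.sum_pair hij,
    Finset.sum_pair hij, hrest]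
  abel

def labelWeight (x : ℕ) : ℕ := if x ≤ 2 then 0 else if x ≤ 4 then 1 else 2

def labelPotential (u : List ℕ) : ℕ := ∑ k ∈ Finset.range u.length, labelWeight (u.getD k 8)

theorem labelPotential_eq_zero_iff {u : List ℕ} : labelPotential u = 0 ↔ Is012String u := by
  simp only [labelPotential, Finset.sum_eq_zero_iff, Finset.mem_range, Is012String,
    List.forall_mem_iff_getElem, labelWeight]
  refine forall₂_congr fun k hk => ?_
  rw [List.getD_eq_getElem u 8 hk]
  split_ifs <;> simp_all

theorem pieriRules_labelWeight_le : ∀ r ∈ pieriRules,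
    labelWeight r.2.1.1 + labelWeight r.2.2.2.1 ≤ labelWeight r.2.1.2 + labelWeight r.2.2.2.2 := by
  decide

theorem PieriStep.lt {u v : List ℕ} {i j : ℕ} {ty : PieriType} (h : PieriStep u v i j ty) :
    i < j :=
  let ⟨_, _, _, hij, _⟩ := h
  hij

theorem PieriStep.labelPotential_le {u v : List ℕ} {i j : ℕ} {ty : PieriType}
    (h : PieriStep u v i j ty) : labelPotential u ≤ labelPotential v := by
  obtain ⟨r, hr, -, hij, hj, hlen, hui, hvi, huj, hvj, -, hout⟩ := h
  have hweight := pieriRules_labelWeight_le r hr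
  have hsum := Finset.sum_add_eq_sum_add_of_eq_off_pair (s := Finset.range u.length)
    (f := fun k => labelWeight (u.getD k 8)) (g := fun k => labelWeight (v.getD k 8))
    (Finset.mem_range.2 (hij.trans hj)) (Finset.mem_range.2 hj) hij.ne
    fun k _ hki hkj => by rw [hout k hki hkj]
  simp only [hui, hvi, huj, hvj] at hsum
  unfold labelPotential
  rw [hlen]
  omega

structure Is012Step (u v : List ℕ) (i j : ℕ) : Prop where
  lt : i < j
  left_le_one : u.getD i 8 ≤ 1
  right_eq_two : u.getD j 8 = 2
  lt_left_of_between : ∀ k, i < k → k < j → u.getD k 8 < u.getD i 8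
  left_eq_two : v.getD i 8 = 2
  right_eq_left : v.getD j 8 = u.getD i 8
  getD_eq_of_ne : ∀ k, k ≠ i → k ≠ j → v.getD k 8 = u.getD k 8

theorem pieriRules_swap_of_le_two : ∀ r ∈ pieriRules,
    r.2.1.1 ≤ 2 → r.2.1.2 ≤ 2 → r.2.2.2.1 ≤ 2 →
      r.2.1.1 ≤ 1 ∧ r.2.1.2 = 2 ∧ r.2.2.2.1 = 2 ∧ r.2.2.2.2 = r.2.1.1 ∧
        ∀ x ∈ r.2.2.1, x < r.2.1.1 := by
  decide

theorem PieriStep.is012Step {u v : List ℕ} {i j : ℕ} {ty : PieriType}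
    (h : PieriStep u v i j ty) (hu : Is012String u) (hv : Is012String v) : Is012Step u v i j := by
  obtain ⟨r, hr, -, hij, hj, hlen, hui, hvi, huj, hvj, hS, hout⟩ := h
  have entry_le_two {w : List ℕ} (hw : Is012String w) {k : ℕ} (hk : k < w.length) :
      w.getD k 8 ≤ 2 := by
    rw [List.getD_eq_getElem w 8 hk]
    exact hw _ (List.getElem_mem hk)
  obtain ⟨hi1, hvi2, huj2, hvj', hlt⟩ := pieriRules_swap_of_le_two r hr
    (hui ▸ entry_le_two hu (hij.trans hj)) (hvi ▸ entry_le_two hv (hlen ▸ hij.trans hj))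
    (huj ▸ entry_le_two hu hj)
  exact ⟨hij, hui ▸ hi1, huj ▸ huj2, fun k hik hkj => hui ▸ hlt _ (hS k hik hkj),
    hvi ▸ hvi2, by rw [hvj, hui, hvj'], fun k hki hkj => (hout k hki hkj).symm⟩

theorem Is012Step.le_left_of_lt_right {u w x : List ℕ} {i j i' j' : ℕ}
    (h₁ : Is012Step u w i j) (h₂ : Is012Step w x i' j') (hcross : i < j') : j ≤ i' := by
  by_contra! hi'j
  have hii' : i < i' := by
    by_contra! hi'i
    rcases hi'i.lt_or_eq with hlt | rfl
    · have := h₂.lt_left_of_between i hlt hcross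
      have := h₂.left_le_one
      have := h₁.left_eq_two
      omega
    · have := h₂.left_le_one
      have := h₁.left_eq_two
      omega
  have hwi' : w.getD i' 8 < w.getD j 8 := by
    rw [h₁.getD_eq_of_ne i' hii'.ne' hi'j.ne, h₁.right_eq_left]
    exact h₁.lt_left_of_between i' hii' hi'j
  rcases lt_trichotomy j' j with hlt | rfl | hgt
  · have := h₁.lt_left_of_between j' hcross hlt
    have := h₁.getD_eq_of_ne j' hcross.ne' hlt.ne
    have := h₂.right_eq_two
    have := h₁.left_le_one
    omega
  · have := h₂.right_eq_two
    have := h₁.right_eq_left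
    have := h₁.left_le_one
    omega
  · have := h₂.lt_left_of_between j hi'j hgt
    omega

section Chain

variable {L : List (List ℕ)} {idx : ℕ → ℕ × ℕ} {ty : ℕ → PieriType}

theorem labelPotential_getD_mono
    (hstep : ∀ t, t + 1 < L.length →
      PieriStep (L.getD t []) (L.getD (t+1) []) (idx t).1 (idx t).2 (ty t))
    {s t : ℕ} (hst : s ≤ t) (ht : t < L.length) :
    labelPotential (L.getD s []) ≤ labelPotential (L.getD t []) := by
  induction t, hst using Nat.le_induction with
  | base => exact le_rfl
  | succ t _ ih => exact (ih (by omega)).trans (hstep t ht).labelPotential_le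

theorem is012String_getD_of_le
    (hstep : ∀ t, t + 1 < L.length →
      PieriStep (L.getD t []) (L.getD (t+1) []) (idx t).1 (idx t).2 (ty t))
    {n : ℕ} (hn : n < L.length) (hlast : Is012String (L.getD n [])) {t : ℕ} (htn : t ≤ n) :
    Is012String (L.getD t []) :=
  labelPotential_eq_zero_iff.1 <| Nat.eq_zero_of_le_zero <|
    (labelPotential_getD_mono hstep htn hn).trans (labelPotential_eq_zero_iff.2 hlast).le

end Chain

theorem lt_of_nonoverlap {n : ℕ} {idx : ℕ → ℕ × ℕ}
    (hlt : ∀ t, t < n → (idx t).1 < (idx t).2)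
    (hnov : ∀ t, t + 1 < n → (idx t).2 ≤ (idx (t+1)).1)
    {s t : ℕ} (hst : s ≤ t) (ht : t < n) : (idx s).1 < (idx t).2 := by
  induction t, hst using Nat.le_induction with
  | base => exact hlt s ht
  | succ t _ ih =>
    have := ih (by omega)
    have := hnov t ht
    have := hlt (t + 1) ht
    omega

theorem pieri_012_nonoverlap_general (u v : List ℕ) (p : ℕ)
    (hv : Is012String v) :
    PieriRel p u v ↔
      ∃ (L : List (List ℕ)) (idx : ℕ → ℕ × ℕ) (ty : ℕ → PieriType),
        L.length = p + 1 ∧ L.getD 0 [] = u ∧ L.getD p [] = v ∧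
        (∀ t, t + 1 < L.length →
          PieriStep (L.getD t []) (L.getD (t+1) []) (idx t).1 (idx t).2 (ty t)) ∧
        (∀ t, t + 2 < L.length → (idx t).2 ≤ (idx (t+1)).1) := by
  constructor
  · rintro ⟨L, idx, ty, hlen, h0, hp, hstep, hcross⟩
    have h012 (t : ℕ) (ht : t ≤ p) : Is012String (L.getD t []) :=
      is012String_getD_of_le hstep (by omega) (hp ▸ hv) ht
    have hswap (t : ℕ) (ht : t < p) :
        Is012Step (L.getD t []) (L.getD (t+1) []) (idx t).1 (idx t).2 :=
      (hstep t (by omega)).is012Step (h012 t ht.le) (h012 (t + 1) ht)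
    refine ⟨L, idx, ty, hlen, h0, hp, hstep, fun t ht => ?_⟩
    exact (hswap t (by omega)).le_left_of_lt_right (hswap (t + 1) (by omega))
      (hcross t (t + 1) t.le_succ (by omega))
  · rintro ⟨L, idx, ty, hlen, h0, hp, hstep, hnov⟩
    refine ⟨L, idx, ty, hlen, h0, hp, hstep, fun s t hst ht => ?_⟩
    exact lt_of_nonoverlap (n := p) (fun t ht => (hstep t (by omega)).lt)
      (fun t ht => hnov t (by omega)) hst (by omega)

/-- For 012-strings, a Pieri chain (crossing condition) exists iff a chain with the
stronger non-overlapping condition jₜ ≤ i_{t+1} exists. -/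
theorem pieri_012_nonoverlap (u v : List ℕ) (p : ℕ)
    (hu : Is012String u) (hv : Is012String v) :
    PieriRel p u v ↔
      ∃ (L : List (List ℕ)) (idx : ℕ → ℕ × ℕ) (ty : ℕ → PieriType),
        L.length = p + 1 ∧ L.getD 0 [] = u ∧ L.getD p [] = v ∧
        (∀ t, t + 1 < L.length →
          PieriStep (L.getD t []) (L.getD (t+1) []) (idx t).1 (idx t).2 (ty t)) ∧
        (∀ t, t + 2 < L.length → (idx t).2 ≤ (idx (t+1)).1) :=
  pieri_012_nonoverlap_general u v p hv
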